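/- Let β̃, γ ∈ ℝ with γ ≠ 0, set λ = (β̃ + γ)/γ and Γ = max(exp(|γ|), exp(|β̃ + γ|)), and suppose |λ| > 1. Then: (i) there exist u, u′ ∈ [0,1] with exp((β̃ + γ)(u − u′)) = Γ (sharpness of the Rosenbaum bounds at x = 1); and (ii) for all u, u′ ∈ [0,1], Γ^{−1/|λ|} ≤ exp(γ(u − u′)) ≤ Γ^{1/|λ|}, and there exist u, u′ ∈ [0,1] with exp(γ(u − u′)) = Γ^{1/|λ|}. -/

import Mathlib

/-! With `b = β̃ + γ`, the hypothesis `|λ| > 1` says `|γ| < |b|`, so `Γ = exp |b|` and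
`Γ ^ (1/|λ|) = exp (|b| · |γ|/|b|) = exp |γ|`. Both claims then reduce to the fact that for
`u, u' ∈ [0,1]` the quantity `c (u - u')` ranges exactly over `[-|c|, |c|]`. -/

open Set Real

theorem abs_mul_sub_le_abs_of_mem_Icc (c : ℝ) {u u' : ℝ} (hu : u ∈ Icc (0 : ℝ) 1)
    (hu' : u' ∈ Icc (0 : ℝ) 1) : |c * (u - u')| ≤ |c| := by
  have h : |u - u'| ≤ 1 := abs_sub_le_iff.mpr ⟨by linarith [hu.2, hu'.1], by linarith [hu.1, hu'.2]⟩
  simpa [abs_mul] using mul_le_mul_of_nonneg_left h (abs_nonneg c)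

theorem exists_mem_Icc_exp_mul_sub_eq_exp_abs (c : ℝ) :
    ∃ u ∈ Icc (0 : ℝ) 1, ∃ u' ∈ Icc (0 : ℝ) 1, exp (c * (u - u')) = exp |c| := by
  rcases le_or_gt 0 c with hc | hc
  · exact ⟨1, right_mem_Icc.mpr zero_le_one, 0, left_mem_Icc.mpr zero_le_one, by
      rw [abs_of_nonneg hc]; ring_nf⟩
  · exact ⟨0, left_mem_Icc.mpr zero_le_one, 1, right_mem_Icc.mpr zero_le_one, by
      rw [abs_of_neg hc]; ring_nf⟩

theorem stmt13_general (btil γ : ℝ) (lam Γ : ℝ)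
    (hlam : lam = (btil + γ) / γ)
    (hΓ : Γ = max (Real.exp |γ|) (Real.exp |btil + γ|))
    (habs : 1 < |lam|) :
    (∃ u ∈ Set.Icc (0:ℝ) 1, ∃ u' ∈ Set.Icc (0:ℝ) 1,
      Real.exp ((btil + γ) * (u - u')) = Γ) ∧
    (∀ u ∈ Set.Icc (0:ℝ) 1, ∀ u' ∈ Set.Icc (0:ℝ) 1,
      Γ ^ (-(1 / |lam|)) ≤ Real.exp (γ * (u - u')) ∧
      Real.exp (γ * (u - u')) ≤ Γ ^ (1 / |lam|)) ∧
    (∃ u ∈ Set.Icc (0:ℝ) 1, ∃ u' ∈ Set.Icc (0:ℝ) 1,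
      Real.exp (γ * (u - u')) = Γ ^ (1 / |lam|)) := by
  set b := btil + γ
  have hlam_abs : |lam| = |b| / |γ| := by rw [hlam, abs_div]
  have hγ : 0 < |γ| := by
    refine abs_pos.mpr fun h => ?_
    norm_num [hlam_abs, h] at habs
  have hγb : |γ| < |b| := by rwa [hlam_abs, one_lt_div hγ] at habs
  have hΓb : Γ = exp |b| := by rw [hΓ, max_eq_right (exp_le_exp.mpr hγb.le)]
  have hexponent : |b| * (1 / |lam|) = |γ| := by
    rw [hlam_abs]; field_simp [(hγ.trans hγb).ne']
  have hpow : Γ ^ (1 / |lam|) = exp |γ| := by rw [hΓb, ← exp_mul, hexponent]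
  have hpow_neg : Γ ^ (-(1 / |lam|)) = exp (-|γ|) := by
    rw [hΓb, ← exp_mul, mul_neg, hexponent]
  refine ⟨hΓb ▸ exists_mem_Icc_exp_mul_sub_eq_exp_abs b, fun u hu u' hu' => ?_,
    hpow ▸ exists_mem_Icc_exp_mul_sub_eq_exp_abs γ⟩
  obtain ⟨hlower, hupper⟩ := abs_le.mp (abs_mul_sub_le_abs_of_mem_Icc γ hu hu')
  rw [hpow, hpow_neg]
  exact ⟨exp_le_exp.mpr hlower, exp_le_exp.mpr hupper⟩

/-- Corollary 1, case 3: with `λ = (β̃ + γ)/γ` and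
`Γ = max (exp |γ|) (exp |β̃ + γ|)`, if `|λ| > 1` then (i) there exist `u, u' ∈ [0,1]` with
`exp ((β̃ + γ)(u - u')) = Γ` (sharpness at `x = 1`); and (ii) for all `u, u' ∈ [0,1]`,
`Γ ^ (-(1/|λ|)) ≤ exp (γ (u - u')) ≤ Γ ^ (1/|λ|)`, the upper bound being attained. -/
theorem stmt13 (btil γ : ℝ) (hγ : γ ≠ 0) (lam Γ : ℝ)
    (hlam : lam = (btil + γ) / γ)
    (hΓ : Γ = max (Real.exp |γ|) (Real.exp |btil + γ|))
    (habs : 1 < |lam|) :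
    (∃ u ∈ Set.Icc (0:ℝ) 1, ∃ u' ∈ Set.Icc (0:ℝ) 1,
      Real.exp ((btil + γ) * (u - u')) = Γ) ∧
    (∀ u ∈ Set.Icc (0:ℝ) 1, ∀ u' ∈ Set.Icc (0:ℝ) 1,
      Γ ^ (-(1 / |lam|)) ≤ Real.exp (γ * (u - u')) ∧
      Real.exp (γ * (u - u')) ≤ Γ ^ (1 / |lam|)) ∧
    (∃ u ∈ Set.Icc (0:ℝ) 1, ∃ u' ∈ Set.Icc (0:ℝ) 1,
      Real.exp (γ * (u - u')) = Γ ^ (1 / |lam|)) :=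
  stmt13_general btil γ lam Γ hlam hΓ habs
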